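/- arXiv:1207.6750 — 2 statements merged into one kernel-verified Lean document; each statement's English description precedes it below -/
import Mathlib

section
/- For any N×N matrix A over a commutative ring, the polynomial identity z · sum(adj(I - A·z)·A) = sum(adj(I - A·z)) - N · det(I - A·z) holds, where sum denotes the sum of all matrix entries. -/
open Polynomial Matrix

/-- The sum of all the entries of a matrix. -/
def sumEntries {R : Type*} [AddCommMonoid R] {N : ℕ} (M : Matrix (Fin N) (Fin N) R) : R :=
  ∑ i, ∑ j, M i j

section sumEntries

variable {R : Type*} {N : ℕ}

theorem sumEntries_sub [AddCommGroup R] (M M' : Matrix (Fin N) (Fin N) R) :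
    sumEntries (M - M') = sumEntries M - sumEntries M' := by
  simp only [sumEntries, Matrix.sub_apply, Finset.sum_sub_distrib]

theorem sumEntries_smul [Semiring R] (c : R) (M : Matrix (Fin N) (Fin N) R) :
    sumEntries (c • M) = c * sumEntries M := by
  simp only [sumEntries, Matrix.smul_apply, smul_eq_mul, Finset.mul_sum]

theorem sumEntries_one [AddCommMonoidWithOne R] :
    sumEntries (1 : Matrix (Fin N) (Fin N) R) = N := by
  simp [sumEntries, one_apply]

end sumEntries

theorem adjugate_one_sub_mul {n R : Type*} [Fintype n] [DecidableEq n] [CommRing R]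
    (B : Matrix n n R) :
    adjugate (1 - B) * B = adjugate (1 - B) - (1 - B).det • 1 := by
  nth_rw 2 [← sub_sub_cancel 1 B]
  rw [mul_sub, mul_one, adjugate_mul]

/-- For any `N×N` matrix `A` over a commutative ring,
`z · sum(adj(I - A·z)·A) = sum(adj(I - A·z)) - N · det(I - A·z)`. -/
theorem stmt3 {R : Type*} [CommRing R] {N : ℕ} (A : Matrix (Fin N) (Fin N) R) :
    (X : R[X]) *
        sumEntries (adjugate ((1 : Matrix (Fin N) (Fin N) R[X]) - (X : R[X]) • A.map C) * A.map C)
      = sumEntries (adjugate ((1 : Matrix (Fin N) (Fin N) R[X]) - (X : R[X]) • A.map C))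
        - (N : R[X]) * ((1 : Matrix (Fin N) (Fin N) R[X]) - (X : R[X]) • A.map C).det := by
  rw [← sumEntries_smul, ← mul_smul_comm, adjugate_one_sub_mul, sumEntries_sub, sumEntries_smul,
    sumEntries_one, mul_comm]
end

section
/- Let A be an N×N matrix with det(I - A·z) = d_0 + ... + d_{N-r} z^{N-r} of degree N-r (d_{N-r} ≠ 0) and sum(adj(I - A·z)) = k_0 + ... + k_{N-1-s} z^{N-1-s} of degree N-1-s with s = r. Then the value of the rational function sum(adj(A - I·z))/det(A - I·z) at z = 0 equals -k_{N-1-s}/d_{N-r}. -/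
open Polynomial Matrix

/-- `det(I - A·z)`. -/
noncomputable def detIsubAz {N : ℕ} (A : Matrix (Fin N) (Fin N) ℚ) : ℚ[X] :=
  ((1 : Matrix (Fin N) (Fin N) ℚ[X]) - (X : ℚ[X]) • A.map C).det

/-- `det(A - I·z)`. -/
noncomputable def detAsubIz {N : ℕ} (A : Matrix (Fin N) (Fin N) ℚ) : ℚ[X] :=
  (A.map C - (X : ℚ[X]) • (1 : Matrix (Fin N) (Fin N) ℚ[X])).det

/-- `sum(adj(I - A·z))`. -/
noncomputable def sumAdjIsubAz {N : ℕ} (A : Matrix (Fin N) (Fin N) ℚ) : ℚ[X] :=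
  sumEntries (adjugate ((1 : Matrix (Fin N) (Fin N) ℚ[X]) - (X : ℚ[X]) • A.map C))

/-- `sum(adj(A - I·z))`. -/
noncomputable def sumAdjAsubIz {N : ℕ} (A : Matrix (Fin N) (Fin N) ℚ) : ℚ[X] :=
  sumEntries (adjugate (A.map C - (X : ℚ[X]) • (1 : Matrix (Fin N) (Fin N) ℚ[X])))

/-!
Over `ℚ(z)` we have `A - z I = -z (I - z⁻¹ A)`, so with `d = det(I - A z)` and
`k = sum(adj(I - A z))`,
`det(A - z I) = (-z)^N d(1/z) = (-1)^N z^r d_rev(z)` and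
`sum(adj(A - z I)) = (-z)^(N-1) k(1/z) = (-1)^(N-1) z^s k_rev(z)`,
where `_rev` is the reversed polynomial. For `s = r` the powers of `z` cancel and the quotient is
`-k_rev / d_rev`, whose value at `0` is `-lead k / lead d`; here `lead d ≠ 0` because `d(0) = 1`.
-/

universe u

namespace RatFunc

variable {K : Type u} [Field K]

theorem algebraMap_eq_eval₂_X (p : K[X]) :
    algebraMap K[X] (RatFunc K) p = p.eval₂ (algebraMap K (RatFunc K)) RatFunc.X := by
  nth_rw 1 [← aeval_X_left_apply p]
  rw [← aeval_def, ← algebraMap_X, aeval_algebraMap_apply]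

noncomputable def evalInvX : K[X] →+* RatFunc K :=
  eval₂RingHom (algebraMap K (RatFunc K)) RatFunc.X⁻¹

theorem algebraMap_reflect {p : K[X]} {n : ℕ} (hp : p.natDegree ≤ n) :
    algebraMap K[X] (RatFunc K) (p.reflect n) = RatFunc.X ^ n * evalInvX p := by
  have : Invertible (RatFunc.X⁻¹ : RatFunc K) := invertibleOfNonzero (inv_ne_zero X_ne_zero)
  rw [evalInvX, coe_eval₂RingHom, ← eval₂_reflect_mul_pow _ _ n p hp, invOf_eq_inv, inv_inv,
    algebraMap_eq_eval₂_X, inv_pow, mul_left_comm, mul_inv_cancel₀ (pow_ne_zero _ X_ne_zero),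
    mul_one]

theorem mk_mul_mul_left {c : K[X]} (hc : c ≠ 0) (p q : K[X]) :
    RatFunc.mk (c * p) (c * q) = RatFunc.mk p q := by
  rw [mk_eq_div, mk_eq_div, map_mul, map_mul, mul_div_mul_left _ _ (algebraMap_ne_zero hc)]

theorem eval_mk_of_eval₂_ne_zero {L : Type u} [Field L] (f : K →+* L) (a : L) (p : K[X])
    {q : K[X]} (hq : q.eval₂ f a ≠ 0) :
    eval f a (RatFunc.mk p q) = p.eval₂ f a / q.eval₂ f a := by
  have hq0 : q ≠ 0 := by rintro rfl; simp at hq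
  rw [mk_eq_div]
  set x := algebraMap K[X] (RatFunc K) p / algebraMap K[X] (RatFunc K) q
  have hx : x.denom.eval₂ f a ≠ 0 := by
    obtain ⟨c, hc⟩ := denom_div_dvd p q
    intro h
    rw [hc, eval₂_mul, h, zero_mul] at hq
    exact hq rfl
  have hcross : x.num * q = p * x.denom := (num_mul_eq_mul_denom_iff hq0).mpr rfl
  rw [eval, div_eq_div_iff hx hq, ← eval₂_mul, ← eval₂_mul, hcross]

theorem eval_zero_mk_reverse (p : K[X]) {q : K[X]} (hq : q ≠ 0) :
    eval (RingHom.id K) 0 (RatFunc.mk p.reverse q.reverse) = p.leadingCoeff / q.leadingCoeff := by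
  have hq' : q.reverse.eval₂ (RingHom.id K) 0 ≠ 0 := by
    rwa [eval₂_id, ← coeff_zero_eq_eval_zero, coeff_zero_reverse, leadingCoeff_ne_zero]
  rw [eval_mk_of_eval₂_ne_zero _ _ _ hq', eval₂_id, eval₂_id, ← coeff_zero_eq_eval_zero,
    ← coeff_zero_eq_eval_zero, coeff_zero_reverse, coeff_zero_reverse]

end RatFunc

open RatFunc (evalInvX)

theorem Polynomial.eq_X_pow_mul_reverse_of_algebraMap_eq {K : Type*} [Field K] {p q : K[X]}
    {m r : ℕ} (hm : p.natDegree + r = m)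
    (h : algebraMap K[X] (RatFunc K) q = (-RatFunc.X) ^ m * evalInvX p) :
    q = (-1) ^ m * X ^ r * p.reverse := by
  apply RatFunc.algebraMap_injective K
  rw [h, reverse, map_mul, map_mul, RatFunc.algebraMap_reflect le_rfl, map_pow, map_pow, map_neg,
    map_one, RatFunc.algebraMap_X, neg_pow, ← hm, pow_add]
  ring

namespace Matrix

variable {K : Type*} [Field K] {n : Type*} [DecidableEq n] (A : Matrix n n K)

theorem map_sub_X_smul_one_eq_neg_X_smul :
    (A.map C - (X : K[X]) • 1).map (algebraMap K[X] (RatFunc K))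
      = (-RatFunc.X : RatFunc K) • (1 - (X : K[X]) • A.map C).map evalInvX := by
  ext i j
  by_cases hij : i = j
  · simp [hij, evalInvX, RatFunc.algebraMap_X]
    field_simp [RatFunc.X_ne_zero]
    ring
  · simp [hij, evalInvX]
    field_simp [RatFunc.X_ne_zero]

variable [Fintype n]

theorem algebraMap_det_sub_X_smul_one :
    algebraMap K[X] (RatFunc K) (A.map C - (X : K[X]) • 1).det
      = (-RatFunc.X) ^ Fintype.card n * evalInvX A.charpolyRev := by
  rw [RingHom.map_det, RingHom.mapMatrix_apply, map_sub_X_smul_one_eq_neg_X_smul, det_smul,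
    charpolyRev, RingHom.map_det, RingHom.mapMatrix_apply]

theorem map_adjugate_sub_X_smul_one :
    (adjugate (A.map C - (X : K[X]) • 1)).map (algebraMap K[X] (RatFunc K))
      = (-RatFunc.X : RatFunc K) ^ (Fintype.card n - 1) •
          (adjugate (1 - (X : K[X]) • A.map C)).map evalInvX := by
  rw [← RingHom.mapMatrix_apply, RingHom.map_adjugate, RingHom.mapMatrix_apply,
    map_sub_X_smul_one_eq_neg_X_smul, adjugate_smul, ← RingHom.mapMatrix_apply,
    ← RingHom.map_adjugate, RingHom.mapMatrix_apply]

end Matrix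

section

variable {N : ℕ} (A : Matrix (Fin N) (Fin N) ℚ)

theorem detIsubAz_ne_zero : detIsubAz A ≠ 0 := by
  intro h
  have h1 : (detIsubAz A).eval 0 = 1 := A.eval_charpolyRev
  simp [h] at h1

theorem detAsubIz_eq_X_pow_mul_reverse {r : ℕ} (hr : (detIsubAz A).natDegree + r = N) :
    detAsubIz A = (-1) ^ N * X ^ r * (detIsubAz A).reverse := by
  refine eq_X_pow_mul_reverse_of_algebraMap_eq hr ?_
  have h := A.algebraMap_det_sub_X_smul_one
  rwa [Fintype.card_fin] at h

theorem sumAdjAsubIz_eq_X_pow_mul_reverse {s : ℕ}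
    (hs : (sumAdjIsubAz A).natDegree + s = N - 1) :
    sumAdjAsubIz A = (-1) ^ (N - 1) * X ^ s * (sumAdjIsubAz A).reverse := by
  refine eq_X_pow_mul_reverse_of_algebraMap_eq hs ?_
  have h := A.map_adjugate_sub_X_smul_one
  rw [Fintype.card_fin] at h
  simp only [sumAdjAsubIz, sumAdjIsubAz, sumEntries, map_sum, Finset.mul_sum]
  refine Finset.sum_congr rfl fun i _ => Finset.sum_congr rfl fun j _ => ?_
  simpa using congrFun (congrFun h i) j

end

theorem stmt6_general {N : ℕ} (A : Matrix (Fin N) (Fin N) ℚ) (r s : ℕ)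
    (hs : s ≤ N - 1) (hsr : s = r)
    (hdet : (detIsubAz A).natDegree = N - r)
    (hadj : (sumAdjIsubAz A).natDegree = N - 1 - s) :
    RatFunc.eval (RingHom.id ℚ) 0 (RatFunc.mk (sumAdjAsubIz A) (detAsubIz A))
      = - (sumAdjIsubAz A).coeff (N - 1 - s) / (detIsubAz A).coeff (N - r) := by
  obtain rfl | hN := N.eq_zero_or_pos
  · simp [sumAdjAsubIz, sumAdjIsubAz, sumEntries]
  subst hsr
  have hsign : (-1 : ℚ[X]) ^ N = -(-1) ^ (N - 1) := by
    rw [← neg_one_mul ((-1 : ℚ[X]) ^ (N - 1)), ← pow_succ', Nat.sub_add_cancel hN]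
  have hmk : RatFunc.mk (sumAdjAsubIz A) (detAsubIz A)
      = RatFunc.mk (-sumAdjIsubAz A).reverse (detIsubAz A).reverse := by
    have hc : (-(-1) ^ (N - 1) * X ^ s : ℚ[X]) ≠ 0 := by simp [X_ne_zero]
    rw [← RatFunc.mk_mul_mul_left hc (-sumAdjIsubAz A).reverse,
      sumAdjAsubIz_eq_X_pow_mul_reverse A (s := s) (by omega),
      detAsubIz_eq_X_pow_mul_reverse A (r := s) (by omega), hsign, reverse_neg]
    congr 1
    ring
  rw [hmk, RatFunc.eval_zero_mk_reverse _ (detIsubAz_ne_zero A), leadingCoeff_neg, leadingCoeff,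
    leadingCoeff, hdet, hadj, neg_div]

/-- If `det(I - A·z)` has degree `N - r` and `sum(adj(I - A·z))` has degree `N - 1 - s` with
`s = r`, then the value of `sum(adj(A - I·z))/det(A - I·z)` at `z = 0` equals
`- k_{N-1-s} / d_{N-r}`. -/
theorem stmt6 {N : ℕ} (A : Matrix (Fin N) (Fin N) ℚ) (r s : ℕ)
    (hr : r ≤ N) (hN : 1 ≤ N) (hs : s ≤ N - 1) (hsr : s = r)
    (hdet : (detIsubAz A).natDegree = N - r)
    (hadj : (sumAdjIsubAz A).natDegree = N - 1 - s) (hadj0 : sumAdjIsubAz A ≠ 0) :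
    RatFunc.eval (RingHom.id ℚ) 0 (RatFunc.mk (sumAdjAsubIz A) (detAsubIz A))
      = - (sumAdjIsubAz A).coeff (N - 1 - s) / (detIsubAz A).coeff (N - r) :=
  stmt6_general A r s hs hsr hdet hadj
end
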